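/- Fix $x\in X$, where $X\subset\mathbb{R}^N$ is compact with $\dim_H X<k$, and let $\phi:X\to\mathbb{R}^k$ be Lipschitz. Then the set of maps $L\in E$ (linear maps given by $k$ vectors in the unit ball of $\mathbb{R}^N$) for which there exists $y\in X\setminus\{x\}$ with $\phi(x)+Lx=\phi(y)+Ly$ has Lebesgue measure zero. -/

import Mathlib

/-!
Split `X \ {x}` into the pieces `{y ∈ X | η ≤ dist y x}`, `η > 0`. A collision at `y` means
`⟪l i, y - x⟫ = φ x i - φ y i` for every `i`. If `y` ranges over a set `t` of diameter `D`
containing some `y₀` of the piece, the Lipschitz bound confines each `l i` to a slab of width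
`O(D / η)` orthogonal to `y₀ - x`, whose share of the unit ball is `O(D / η)`; so the
collisions coming from `t` have measure `O(D ^ k)`. Since `dimH X < k`, the `k`-dimensional
Hausdorff measure of `X` vanishes, and covers of the piece with `∑ D ^ k` arbitrarily small
make its collision set null.
-/

open MeasureTheory Metric Set
open scoped NNReal ENNReal

/-- The normalized `k`-fold product of the normalized Lebesgue measure on the closed
unit ball of `ℝ^N`, i.e. the natural probability measure on the parameter space
`E = (B_N(0,1))^k` of linear maps `L x = (⟪l 1, x⟫, …, ⟪l k, x⟫)`. -/
noncomputable def LebE (N k : ℕ) : Measure (Fin k → EuclideanSpace ℝ (Fin N)) :=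
  Measure.pi fun _ =>
    (volume (Metric.closedBall (0 : EuclideanSpace ℝ (Fin N)) 1))⁻¹ •
      volume.restrict (Metric.closedBall (0 : EuclideanSpace ℝ (Fin N)) 1)

theorem EuclideanSpace.volume_box {ι : Type*} [Fintype ι] [DecidableEq ι] (i : ι)
    (a δ : ℝ) :
    volume {w : EuclideanSpace ℝ ι | |w i - a| ≤ δ ∧ ∀ j ≠ i, |w j| ≤ 1} =
      2 ^ Fintype.card ι * ENNReal.ofReal δ := by
  set box := Function.update (fun _ => Icc (-1 : ℝ) 1) i (Icc (a - δ) (a + δ))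
  have hbox : {w : EuclideanSpace ℝ ι | |w i - a| ≤ δ ∧ ∀ j ≠ i, |w j| ≤ 1} =
      WithLp.ofLp ⁻¹' pi univ box := by
    ext w
    simp only [mem_ofPred_eq, mem_preimage, mem_univ_pi, box, Function.update_apply]
    constructor
    · rintro ⟨hi, hj⟩ j
      split_ifs with h
      · subst h; exact ⟨by linarith [abs_le.mp hi], by linarith [abs_le.mp hi]⟩
      · exact abs_le.mp (hj j h)
    · intro h
      have hi : w i ∈ Icc (a - δ) (a + δ) := by simpa using h i
      refine ⟨abs_le.mpr ⟨by linarith [hi.1], by linarith [hi.2]⟩, fun j hj => abs_le.mpr ?_⟩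
      simpa [if_neg hj] using h j
  have hvol : ∀ j, volume (box j) = 2 * if j = i then ENNReal.ofReal δ else 1 := by
    intro j
    rcases eq_or_ne j i with rfl | hj
    · rw [if_pos rfl, ← ENNReal.ofReal_ofNat, ← ENNReal.ofReal_mul zero_le_two]
      simp only [box, Function.update_self, Real.volume_Icc]; ring_nf
    · simp [box, hj, Real.volume_Icc]; norm_num
  have hmeas : MeasurableSet (pi univ box) :=
    MeasurableSet.univ_pi fun j => by
      rcases eq_or_ne j i with rfl | hj <;> simp [box, *, measurableSet_Icc]
  rw [hbox, (PiLp.volume_preserving_ofLp ι).measure_preimage hmeas.nullMeasurableSet,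
    volume_pi_pi, Finset.prod_congr rfl fun j _ => hvol j, Finset.prod_mul_distrib]
  simp

theorem exists_orthonormalBasis_apply_eq {𝕜 ι E : Type*} [RCLike 𝕜] [Fintype ι]
    [NormedAddCommGroup E] [InnerProductSpace 𝕜 E] [FiniteDimensional 𝕜 E]
    (hcard : Module.finrank 𝕜 E = Fintype.card ι) {e : E} (he : ‖e‖ = 1) (i : ι) :
    ∃ b : OrthonormalBasis ι 𝕜 E, b i = e := by
  have hsingle : Orthonormal 𝕜 (({i} : Set ι).domRestrict fun _ => e) :=
    ⟨fun _ => he, fun j j' hjj' => absurd (Subsingleton.elim j j') hjj'⟩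
  obtain ⟨b, hb⟩ := hsingle.exists_orthonormalBasis_extension_of_card_eq hcard
  exact ⟨b, hb i rfl⟩

section UnitBall

open ProbabilityTheory

variable {E : Type*} [NormedAddCommGroup E] [InnerProductSpace ℝ E] [FiniteDimensional ℝ E]
  [MeasurableSpace E] [BorelSpace E]

theorem volume_closedBall_inter_slab_le {u : E} (hu : u ≠ 0) (c ε : ℝ) :
    volume (closedBall (0 : E) 1 ∩ {v | |inner ℝ v u - c| ≤ ε}) ≤
      2 ^ Module.finrank ℝ E * ENNReal.ofReal (ε / ‖u‖) := by
  have hdim : 0 < Module.finrank ℝ E := Module.finrank_pos_iff_exists_ne_zero.mpr ⟨u, hu⟩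
  set i₀ : Fin (Module.finrank ℝ E) := ⟨0, hdim⟩
  have hu' : 0 < ‖u‖ := norm_pos_iff.mpr hu
  obtain ⟨b, hb⟩ :=
    exists_orthonormalBasis_apply_eq (𝕜 := ℝ) (by simp) (norm_smul_inv_norm (𝕜 := ℝ) hu) i₀
  have hsub : closedBall (0 : E) 1 ∩ {v | |inner ℝ v u - c| ≤ ε} ⊆
      b.repr ⁻¹' {w | |w i₀ - c / ‖u‖| ≤ ε / ‖u‖ ∧ ∀ j ≠ i₀, |w j| ≤ 1} := by
    rintro v ⟨hv, hslab⟩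
    have hnorm : ‖b.repr v‖ ≤ 1 := by simpa using hv
    refine ⟨?_, fun j _ => (PiLp.norm_apply_le (b.repr v) j).trans hnorm⟩
    have hcoord : b.repr v i₀ = inner ℝ v u / ‖u‖ := by
      rw [b.repr_apply_apply, hb, real_inner_smul_left, real_inner_comm]
      simp [div_eq_inv_mul]
    rw [hcoord, ← sub_div, abs_div, abs_of_pos hu']
    exact div_le_div_of_nonneg_right hslab hu'.le
  calc volume (closedBall (0 : E) 1 ∩ {v | |inner ℝ v u - c| ≤ ε})
      ≤ volume (b.repr ⁻¹' {w | |w i₀ - c / ‖u‖| ≤ ε / ‖u‖ ∧ ∀ j ≠ i₀, |w j| ≤ 1}) :=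
        measure_mono hsub
    _ = _ := by
      rw [b.measurePreserving_repr.measure_preimage (by measurability),
        EuclideanSpace.volume_box, Fintype.card_fin]

instance : IsProbabilityMeasure ((volume : Measure E)[|closedBall 0 1]) :=
  cond_isProbabilityMeasure_of_finite (measure_closedBall_pos volume 0 one_pos).ne'
    measure_closedBall_lt_top.ne

theorem cond_closedBall_slab_le {u : E} (hu : u ≠ 0) (c ε : ℝ) :
    (volume : Measure E)[{v | v ∈ closedBall 0 1 → |inner ℝ v u - c| ≤ ε} | closedBall 0 1] ≤
      (volume (closedBall (0 : E) 1))⁻¹ * (2 ^ Module.finrank ℝ E * ENNReal.ofReal (ε / ‖u‖)) := by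
  rw [cond_apply measurableSet_closedBall]
  have hslab : closedBall (0 : E) 1 ∩ {v | v ∈ closedBall 0 1 → |inner ℝ v u - c| ≤ ε} =
      closedBall 0 1 ∩ {v | |inner ℝ v u - c| ≤ ε} := by
    ext v; simp only [mem_inter_iff, mem_ofPred_eq]; tauto
  rw [hslab]
  gcongr
  exact volume_closedBall_inter_slab_le hu c ε

end UnitBall

theorem measure_biUnion_null_of_dimH_lt {Y α : Type*} [EMetricSpace Y] [MeasurableSpace Y]
    [BorelSpace Y] [MeasurableSpace α] (μ : Measure α) (B : Y → Set α) {s : Set Y} {d : ℝ≥0}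
    (hs : dimH s < d) {C r : ℝ≥0∞} (hC : C ≠ ∞) (hr : 0 < r)
    (hB : ∀ t, ediam t ≤ r → μ (⋃ y ∈ t ∩ s, B y) ≤ C * ediam t ^ (d : ℝ)) :
    μ (⋃ y ∈ s, B y) = 0 := by
  let m : OuterMeasure Y :=
    { measureOf := fun t => μ (⋃ y ∈ t ∩ s, B y)
      empty := by simp
      mono := fun hst =>
        measure_mono <| biUnion_mono (inter_subset_inter_left _ hst) fun _ _ => le_rfl
      iUnion_nat := fun t _ => by
        simp only [iUnion_inter, biUnion_iUnion]
        exact measure_iUnion_le _ }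
  -- `C + 1` rather than `C`, because `mkMetric_smul` needs a nonzero factor
  have hm : m ≤ OuterMeasure.mkMetric ((C + 1) • fun r : ℝ≥0∞ => r ^ (d : ℝ)) :=
    OuterMeasure.le_mkMetric _ m r hr fun t ht =>
      (hB t ht).trans (mul_le_mul_left le_self_add _)
  rw [OuterMeasure.mkMetric_smul _ (by simpa using hC) (by simp)] at hm
  refine le_antisymm ?_ zero_le
  calc μ (⋃ y ∈ s, B y) = m s := by simp [m]
    _ ≤ (C + 1) * μH[d] s := by
      simpa [OuterMeasure.coe_mkMetric, Measure.hausdorffMeasure] using hm s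
    _ = 0 := by rw [hausdorffMeasure_of_dimH_lt hs, mul_zero]

section Collision

open ProbabilityTheory

variable {ι E : Type*} [NormedAddCommGroup E] [InnerProductSpace ℝ E]

def collisionSet (φ : E → EuclideanSpace ℝ ι) (x y : E) : Set (ι → E) :=
  {l | ∀ i, inner ℝ (l i) (y - x) = φ x i - φ y i}

theorem mem_collisionSet_iff {φ : E → EuclideanSpace ℝ ι} {x y : E} {l : ι → E} :
    l ∈ collisionSet φ x y ↔
      φ x + WithLp.toLp 2 (fun i => inner ℝ (l i) x) =
        φ y + WithLp.toLp 2 (fun i => inner ℝ (l i) y) := by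
  simp only [collisionSet, mem_ofPred_eq, inner_sub_right, PiLp.ext_iff, PiLp.add_apply]
  refine forall_congr' fun i => ?_
  constructor <;> intro h <;> linarith

variable [Fintype ι]

theorem abs_inner_sub_le_of_mem_collisionSet {φ : E → EuclideanSpace ℝ ι} {x y : E} {l : ι → E}
    (hl : l ∈ collisionSet φ x y) {i : ι} (hli : ‖l i‖ ≤ 1) (y₀ : E) :
    |inner ℝ (l i) (y₀ - x) - (φ x i - φ y₀ i)| ≤ dist y₀ y + dist (φ y₀) (φ y) := by
  have hsplit : inner ℝ (l i) (y₀ - x) - (φ x i - φ y₀ i) =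
      inner ℝ (l i) (y₀ - y) + (φ y₀ i - φ y i) := by
    rw [← sub_add_sub_cancel y₀ y x, inner_add_right, hl i]; ring
  rw [hsplit]
  refine (abs_add_le _ _).trans (add_le_add ?_ ?_)
  · calc |inner ℝ (l i) (y₀ - y)| ≤ ‖l i‖ * ‖y₀ - y‖ := abs_real_inner_le_norm _ _
      _ ≤ dist y₀ y := by rw [dist_eq_norm]; exact mul_le_of_le_one_left (norm_nonneg _) hli
  · exact PiLp.dist_apply_le (φ y₀) (φ y) i

variable [FiniteDimensional ℝ E] [MeasurableSpace E] [BorelSpace E]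

theorem measure_pi_biUnion_collisionSet_le {X t : Set E} {φ : E → EuclideanSpace ℝ ι} {K : ℝ≥0}
    (hφ : LipschitzOnWith K φ X) {x : E} {η : ℝ} (hη : 0 < η) (ht : ediam t ≠ ∞) :
    Measure.pi (fun _ : ι => (volume : Measure E)[|closedBall 0 1])
        (⋃ y ∈ t ∩ {y ∈ X | η ≤ dist y x}, collisionSet φ x y) ≤
      ((volume (closedBall (0 : E) 1))⁻¹ * 2 ^ Module.finrank ℝ E *
          ENNReal.ofReal ((1 + K) / η)) ^ Fintype.card ι * ediam t ^ (Fintype.card ι : ℝ) := by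
  rcases (t ∩ {y ∈ X | η ≤ dist y x}).eq_empty_or_nonempty with hempty | ⟨y₀, hy₀t, hy₀X, hy₀x⟩
  · simp [hempty]
  set D := diam t
  have hsub : (⋃ y ∈ t ∩ {y ∈ X | η ≤ dist y x}, collisionSet φ x y) ⊆ pi univ fun i =>
      {v | v ∈ closedBall 0 1 → |inner ℝ v (y₀ - x) - (φ x i - φ y₀ i)| ≤ (1 + K) * D} := by
    simp only [iUnion_subset_iff]
    rintro y ⟨hyt, hyX, -⟩ l hl i - hli
    have hdist : dist y₀ y ≤ D :=
      dist_le_diam_of_mem (isBounded_iff_ediam_ne_top.mpr ht) hy₀t hyt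
    calc |inner ℝ (l i) (y₀ - x) - (φ x i - φ y₀ i)|
        ≤ dist y₀ y + dist (φ y₀) (φ y) :=
          abs_inner_sub_le_of_mem_collisionSet hl (by simpa using hli) y₀
      _ ≤ D + K * D := add_le_add hdist
          ((hφ.dist_le_mul y₀ hy₀X y hyX).trans (mul_le_mul_of_nonneg_left hdist K.2))
      _ = (1 + K) * D := by ring
  have hy₀x' : 0 < ‖y₀ - x‖ := by rw [← dist_eq_norm]; exact hη.trans_le hy₀x
  have hfactor : ∀ i, (volume : Measure E)[{v | v ∈ closedBall 0 1 →
      |inner ℝ v (y₀ - x) - (φ x i - φ y₀ i)| ≤ (1 + K) * D} | closedBall 0 1] ≤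
      (volume (closedBall (0 : E) 1))⁻¹ * 2 ^ Module.finrank ℝ E *
          ENNReal.ofReal ((1 + K) / η) * ENNReal.ofReal D := by
    intro i
    refine (cond_closedBall_slab_le (norm_pos_iff.mp hy₀x') _ _).trans ?_
    have hratio : (1 + K) * D / ‖y₀ - x‖ ≤ (1 + K) / η * D :=
      (div_le_div_of_nonneg_left (mul_nonneg (by positivity) diam_nonneg) hη
        (by rwa [← dist_eq_norm])).trans_eq (by ring)
    rw [mul_assoc, mul_assoc, ← ENNReal.ofReal_mul (by positivity)]
    gcongr
  calc _ ≤ _ := measure_mono hsub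
    _ = _ := Measure.pi_pi _ _
    _ ≤ ∏ _i : ι, (volume (closedBall (0 : E) 1))⁻¹ * 2 ^ Module.finrank ℝ E *
          ENNReal.ofReal ((1 + K) / η) * ENNReal.ofReal D :=
        Finset.prod_le_prod' fun i _ => hfactor i
    _ = _ := by
      rw [Finset.prod_const, mul_pow, ENNReal.rpow_natCast, Finset.card_univ]
      simp [D, diam, ENNReal.ofReal_toReal ht]

end Collision

open ProbabilityTheory in
theorem LebE_eq_pi_cond (N k : ℕ) :
    LebE N k = Measure.pi fun _ => (volume : Measure (EuclideanSpace ℝ (Fin N)))[|closedBall 0 1] :=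
  rfl

theorem collision_set_null_general (N k : ℕ)
    (X : Set (EuclideanSpace ℝ (Fin N)))
    (hdim : dimH X < (k : ℝ≥0∞))
    (φ : EuclideanSpace ℝ (Fin N) → EuclideanSpace ℝ (Fin k))
    (hφ : ∃ K : ℝ≥0, LipschitzOnWith K φ X)
    (x : EuclideanSpace ℝ (Fin N)) :
    LebE N k {l | ∃ y ∈ X, y ≠ x ∧
        φ x + (show EuclideanSpace ℝ (Fin k) from WithLp.toLp 2 (fun i => (inner ℝ (l i) x : ℝ))) =
          φ y + (show EuclideanSpace ℝ (Fin k) from WithLp.toLp 2 (fun i => (inner ℝ (l i) y : ℝ)))} = 0 := by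
  obtain ⟨K, hK⟩ := hφ
  suffices hpiece : ∀ m : ℕ,
      LebE N k (⋃ y ∈ {y ∈ X | 1 / ((m : ℝ) + 1) ≤ dist y x}, collisionSet φ x y) = 0 by
    refine measure_mono_null ?_ (measure_iUnion_null hpiece)
    rintro l ⟨y, hyX, hyx, hcoll⟩
    obtain ⟨m, hm⟩ := exists_nat_one_div_lt (dist_pos.mpr hyx)
    exact mem_iUnion.mpr ⟨m, mem_iUnion₂.mpr ⟨y, ⟨hyX, hm.le⟩, mem_collisionSet_iff.mpr hcoll⟩⟩
  intro m
  rw [LebE_eq_pi_cond]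
  have hball : volume (closedBall (0 : EuclideanSpace ℝ (Fin N)) 1) ≠ 0 :=
    (measure_closedBall_pos volume 0 one_pos).ne'
  have hη : (0 : ℝ) < 1 / ((m : ℝ) + 1) := by positivity
  refine measure_biUnion_null_of_dimH_lt _ _ (d := k)
    (by simpa using (dimH_mono (sep_subset _ _)).trans_lt hdim) ?_ one_pos fun t ht => by
      simpa using measure_pi_biUnion_collisionSet_le hK hη
        (ne_top_of_le_ne_top ENNReal.one_ne_top ht)
  finiteness

/-- For a compact `X ⊆ ℝ^N` with `dim_H X < k`, a Lipschitz `φ : X → ℝ^k`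
and a fixed `x ∈ X`, the set of maps `L ∈ E` for which some `y ∈ X \ {x}` satisfies
`φ(x) + Lx = φ(y) + Ly` has measure zero. -/
theorem collision_set_null (N k : ℕ) (hk : 1 ≤ k) (hkN : k ≤ N)
    (X : Set (EuclideanSpace ℝ (Fin N))) (hX : IsCompact X)
    (hdim : dimH X < (k : ℝ≥0∞))
    (φ : EuclideanSpace ℝ (Fin N) → EuclideanSpace ℝ (Fin k))
    (hφ : ∃ K : ℝ≥0, LipschitzOnWith K φ X)
    (x : EuclideanSpace ℝ (Fin N)) (hx : x ∈ X) :
    LebE N k {l | ∃ y ∈ X, y ≠ x ∧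
        φ x + (show EuclideanSpace ℝ (Fin k) from WithLp.toLp 2 (fun i => (inner ℝ (l i) x : ℝ))) =
          φ y + (show EuclideanSpace ℝ (Fin k) from WithLp.toLp 2 (fun i => (inner ℝ (l i) y : ℝ)))} = 0 :=
  collision_set_null_general N k X hdim φ hφ x
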